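/- arXiv:2401.07499 — 6 statements merged into one kernel-verified Lean document; each statement's English description precedes it below -/
import Mathlib

section
/- Let N ≥ 2, d ≥ 2 be integers, let ψ : (Fin N → Fin d) → ℂ be a unit vector that is genuinely multipartite entangled (GME), and let 𝓕 be a family of subsets of Fin N. If there exists a nonempty proper subset J ⊆ Fin N such that every F ∈ 𝓕 satisfies F ⊆ J or F ⊆ Jᶜ (i.e., the hypergraph G_𝓕 is disconnected by the cut J), then ψ is not 𝓕-UDP: there exists a unit vector φ : (Fin N → Fin d) → ℂ with ρ_F(φ) = ρ_F(ψ) for every F ∈ 𝓕, yet φ ≠ c • ψ for every scalar c : ℂ. -/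
open Finset

/-- Combine `x` defined on `S` with `z` defined on the complement of `S`
into a full assignment `Fin N → Fin d`. -/
def joinFun {N d : ℕ} (S : Finset (Fin N))
    (x : {i // i ∈ S} → Fin d) (z : {i // i ∉ S} → Fin d) : Fin N → Fin d :=
  fun i => if h : i ∈ S then x ⟨i, h⟩ else z ⟨i, h⟩

/-- The marginal (reduced density matrix) of the pure state `ψ` on the parties `S`. -/
noncomputable def marginal {N d : ℕ} (S : Finset (Fin N)) (ψ : (Fin N → Fin d) → ℂ)
    (x y : {i // i ∈ S} → Fin d) : ℂ :=
  ∑ z : {i // i ∉ S} → Fin d,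
    ψ (joinFun S x z) * (starRingEnd ℂ) (ψ (joinFun S y z))

/-- `ψ` is a unit vector. -/
def UnitVec {N d : ℕ} (ψ : (Fin N → Fin d) → ℂ) : Prop :=
  ∑ x, ‖ψ x‖ ^ 2 = 1

/-- `ψ` is genuinely multipartite entangled. -/
def GME {N d : ℕ} (ψ : (Fin N → Fin d) → ℂ) : Prop :=
  ∀ J : Finset (Fin N), J.Nonempty → J ≠ Finset.univ →
    ¬ ∃ (α : ({i // i ∈ J} → Fin d) → ℂ) (β : ({i // i ∉ J} → Fin d) → ℂ),
      ∀ x z, ψ (joinFun J x z) = α x * β z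

/-- `ψ` is uniquely determined by the family of marginals `𝓕` among pure states. -/
def UDP {N d : ℕ} (𝓕 : Finset (Finset (Fin N))) (ψ : (Fin N → Fin d) → ℂ) : Prop :=
  ∀ φ : (Fin N → Fin d) → ℂ, UnitVec φ →
    (∀ F ∈ 𝓕, marginal F φ = marginal F ψ) →
    ∃ c : ℂ, ‖c‖ = 1 ∧ φ = c • ψ

/-!
Cutting the parties along `J` turns `ψ` into a matrix `M` from `J`-configurations to
`Jᶜ`-configurations, with `ρ_J = M Mᴴ` and `ρ_{Jᶜ}` determined by `Mᴴ M`. Replacing `M` by `U M`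
for a unitary `U` keeps `Mᴴ M`, and keeps `M Mᴴ` as soon as `U` commutes with it. The Householder
reflection `U = 1 - 2 v vᴴ` in a unit eigenvector `v` of `M Mᴴ` with nonzero eigenvalue is such a
unitary, and `U M = c M` would force `M` to be the rank-one matrix `v (vᴴ M)`, i.e. `ψ` to be a
product across `J`, which GME excludes. Every marginal on a subset of `J` or of `Jᶜ` is a partial
trace of `ρ_J` or `ρ_{Jᶜ}`, so it is preserved as well.
-/

namespace Matrix

variable {𝕜 m n : Type*} [RCLike 𝕜] [Fintype m] [DecidableEq m] [Fintype n]

def householder (v : m → 𝕜) : Matrix m m 𝕜 := 1 - (2 : 𝕜) • vecMulVec v (star v)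

theorem householder_mem_unitaryGroup {v : m → 𝕜} (hv : star v ⬝ᵥ v = 1) :
    householder v ∈ unitaryGroup m 𝕜 := by
  have hP : vecMulVec v (star v) * vecMulVec v (star v) = vecMulVec v (star v) := by
    rw [vecMulVec_mul_vecMulVec, hv, one_smul]
  have hstar : star (householder v) = householder v := by
    simp [householder, star_eq_conjTranspose, conjTranspose_vecMulVec]
  rw [mem_unitaryGroup_iff, hstar, householder, sub_mul, mul_sub, mul_sub, smul_mul_smul, hP]
  simp only [mul_one, one_mul]
  module

omit [DecidableEq m] in
theorem IsHermitian.star_vecMul_eq_smul {A : Matrix m m 𝕜} (hA : A.IsHermitian) {v : m → 𝕜}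
    {t : ℝ} (hv : A *ᵥ v = t • v) : star v ᵥ* A = t • star v := by
  rw [← hA.eq, ← star_mulVec, hv, star_smul, star_trivial]

theorem commute_householder {A : Matrix m m 𝕜} (hA : A.IsHermitian) {v : m → 𝕜} {t : ℝ}
    (hv : A *ᵥ v = t • v) : Commute (householder v) A := by
  refine (Commute.one_left A).sub_left (Commute.smul_left ?_ _)
  rw [Commute, SemiconjBy, mul_vecMulVec, vecMulVec_mul, hv, hA.star_vecMul_eq_smul hv,
    smul_vecMulVec, vecMulVec_smul]

open scoped ComplexOrder in
theorem householder_mul_ne_smul {M : Matrix m n 𝕜} (hM : ∀ α β, M ≠ vecMulVec α β)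
    {v : m → 𝕜} (hv : star v ⬝ᵥ v = 1) {t : ℝ} (ht : t ≠ 0) (hMv : (M * Mᴴ) *ᵥ v = t • v)
    (c : 𝕜) : householder v * M ≠ c • M := by
  intro hc
  have hsplit : (1 - c) • M = (2 : 𝕜) • vecMulVec v (star v ᵥ* M) := by
    rw [sub_smul, one_smul, ← hc, householder, Matrix.sub_mul, Matrix.one_mul, Matrix.smul_mul,
      vecMulVec_mul]
    abel
  rcases eq_or_ne c 1 with rfl | hc1
  · have hw : star v ᵥ* M = 0 := by
      rw [sub_self, zero_smul, eq_comm, smul_eq_zero_iff_right two_ne_zero] at hsplit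
      simpa [vecMul_vecMulVec, hv] using congrArg (star v ᵥ* ·) hsplit
    have := (vecMul_self_mul_conjTranspose_eq_zero M (star v)).2 hw
    rw [(isHermitian_mul_conjTranspose_self M).star_vecMul_eq_smul hMv] at this
    have := congrArg (· ⬝ᵥ v) this
    simp [hv, ht] at this
  · refine hM v (((1 - c)⁻¹ * 2) • (star v ᵥ* M)) ?_
    rw [vecMulVec_smul, mul_smul, ← hsplit, smul_smul, inv_mul_cancel₀ (sub_ne_zero.2 hc1.symm),
      one_smul]

open scoped ComplexOrder in
theorem exists_unitary_commute_ne_smul (M : Matrix m n 𝕜)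
    (hM : ∀ α β, M ≠ vecMulVec α β) :
    ∃ U ∈ unitaryGroup m 𝕜, Commute U (M * Mᴴ) ∧ ∀ c : 𝕜, U * M ≠ c • M := by
  have hA := isHermitian_mul_conjTranspose_self M
  obtain ⟨k, hk⟩ : ∃ k, hA.eigenvalues k ≠ 0 := by
    by_contra! h
    exact hM 0 0 (by
      simpa using self_mul_conjTranspose_eq_zero.1 (hA.eigenvalues_eq_zero_iff.1 (funext h)))
  set v : m → 𝕜 := ⇑(hA.eigenvectorBasis k)
  have hv : star v ⬝ᵥ v = 1 := by
    rw [dotProduct_comm, ← EuclideanSpace.inner_eq_star_dotProduct, inner_self_eq_norm_sq_to_K,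
      hA.eigenvectorBasis.orthonormal.1 k]
    simp
  exact ⟨householder v, householder_mem_unitaryGroup hv,
    commute_householder hA (hA.mulVec_eigenvectorBasis k),
    householder_mul_ne_smul hM hv hk (hA.mulVec_eigenvectorBasis k)⟩

end Matrix

open Matrix

section Cut

variable {N d : ℕ}

def cutMatrix (J : Finset (Fin N)) (ψ : (Fin N → Fin d) → ℂ) :
    Matrix ({i // i ∈ J} → Fin d) ({i // i ∉ J} → Fin d) ℂ :=
  Matrix.of fun x z => ψ (joinFun J x z)

def ofCutMatrix (J : Finset (Fin N))
    (M : Matrix ({i // i ∈ J} → Fin d) ({i // i ∉ J} → Fin d) ℂ) : (Fin N → Fin d) → ℂ :=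
  fun t => M (fun i => t i) (fun i => t i)

@[simp]
theorem cutMatrix_ofCutMatrix (J : Finset (Fin N))
    (M : Matrix ({i // i ∈ J} → Fin d) ({i // i ∉ J} → Fin d) ℂ) :
    cutMatrix J (ofCutMatrix J M) = M := by
  ext x z
  simp only [cutMatrix, ofCutMatrix, joinFun, of_apply]
  congr 1 <;> funext i <;> simp [i.2]

theorem cutMatrix_smul (J : Finset (Fin N)) (c : ℂ) (ψ : (Fin N → Fin d) → ℂ) :
    cutMatrix J (c • ψ) = c • cutMatrix J ψ :=
  rfl

theorem marginal_eq_mul_conjTranspose (S : Finset (Fin N)) (χ : (Fin N → Fin d) → ℂ) :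
    marginal S χ = cutMatrix S χ * (cutMatrix S χ)ᴴ :=
  rfl

theorem sum_eq_sum_sum_joinFun (S : Finset (Fin N)) {α : Type*} [AddCommMonoid α]
    (f : (Fin N → Fin d) → α) :
    ∑ t, f t = ∑ x : {i // i ∈ S} → Fin d, ∑ z : {i // i ∉ S} → Fin d, f (joinFun S x z) := by
  rw [← (Equiv.piEquivPiSubtypeProd (· ∈ S) fun _ => Fin d).symm.sum_comp f,
    Fintype.sum_prod_type]
  rfl

theorem unitVec_iff_trace_marginal (J : Finset (Fin N)) (χ : (Fin N → Fin d) → ℂ) :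
    UnitVec χ ↔ Matrix.trace (marginal J χ) = 1 := by
  have : Matrix.trace (marginal J χ) = ((∑ t, ‖χ t‖ ^ 2 : ℝ) : ℂ) := by
    rw [Complex.ofReal_sum, sum_eq_sum_sum_joinFun J]
    simp only [Matrix.trace, Matrix.diag, marginal, Complex.mul_conj', Complex.ofReal_pow]
  rw [this, UnitVec]
  exact_mod_cast Iff.rfl

theorem cutMatrix_compl (J : Finset (Fin N)) (χ : (Fin N → Fin d) → ℂ) :
    cutMatrix Jᶜ χ = (cutMatrix J χ)ᵀ.submatrix (fun x i => x ⟨i, mem_compl.2 i.2⟩)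
      (Equiv.arrowCongr (Equiv.subtypeEquivRight fun i => by simp) (Equiv.refl (Fin d))) := by
  ext x u
  simp only [cutMatrix, of_apply, submatrix_apply, transpose_apply]
  congr 1
  funext i
  by_cases hi : i ∈ J <;> simp [joinFun, hi]
  rfl

theorem marginal_compl (J : Finset (Fin N)) (χ : (Fin N → Fin d) → ℂ) :
    marginal Jᶜ χ = ((cutMatrix J χ)ᴴ * cutMatrix J χ)ᵀ.submatrix
      (fun x i => x ⟨i, mem_compl.2 i.2⟩) (fun x i => x ⟨i, mem_compl.2 i.2⟩) := by
  rw [marginal_eq_mul_conjTranspose, cutMatrix_compl, conjTranspose_submatrix,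
    submatrix_mul_equiv, transpose_mul, conjTranspose_transpose_eq_transpose_conjTranspose]

theorem marginal_ofCutMatrix_unitary_mul (J : Finset (Fin N)) (ψ : (Fin N → Fin d) → ℂ)
    {U : Matrix ({i // i ∈ J} → Fin d) ({i // i ∈ J} → Fin d) ℂ} (hU : U ∈ unitaryGroup _ ℂ)
    (hUψ : Commute U (cutMatrix J ψ * (cutMatrix J ψ)ᴴ)) :
    marginal J (ofCutMatrix J (U * cutMatrix J ψ)) = marginal J ψ := by
  rw [marginal_eq_mul_conjTranspose, marginal_eq_mul_conjTranspose, cutMatrix_ofCutMatrix]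
  set M := cutMatrix J ψ
  calc U * M * (U * M)ᴴ = U * (M * Mᴴ) * star U := by
        simp only [conjTranspose_mul, star_eq_conjTranspose, Matrix.mul_assoc]
    _ = M * Mᴴ * (U * star U) := by rw [hUψ.eq, Matrix.mul_assoc]
    _ = M * Mᴴ := by rw [mem_unitaryGroup_iff.1 hU, Matrix.mul_one]

theorem marginal_compl_ofCutMatrix_unitary_mul (J : Finset (Fin N)) (ψ : (Fin N → Fin d) → ℂ)
    {U : Matrix ({i // i ∈ J} → Fin d) ({i // i ∈ J} → Fin d) ℂ} (hU : U ∈ unitaryGroup _ ℂ) :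
    marginal Jᶜ (ofCutMatrix J (U * cutMatrix J ψ)) = marginal Jᶜ ψ := by
  rw [marginal_compl, marginal_compl, cutMatrix_ofCutMatrix, conjTranspose_mul, Matrix.mul_assoc,
    ← Matrix.mul_assoc Uᴴ, ← star_eq_conjTranspose, mem_unitaryGroup_iff'.1 hU, Matrix.one_mul]

end Cut

section Subset

variable {N d : ℕ}

def splitComplEquiv (F G : Finset (Fin N)) (hFG : F ⊆ G) :
    ({i // i ∉ F} → Fin d) ≃
      (({i : {i // i ∉ F} // i.1 ∈ G} → Fin d) × ({i // i ∉ G} → Fin d)) where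
  toFun z := (fun i => z i.1, fun i => z ⟨i.1, fun h => i.2 (hFG h)⟩)
  invFun p i := if h : i.1 ∈ G then p.1 ⟨i, h⟩ else p.2 ⟨i.1, h⟩
  left_inv z := by
    funext i
    dsimp only
    split <;> rfl
  right_inv p := by
    refine Prod.ext ?_ ?_ <;> funext i <;> dsimp only
    · rw [dif_pos i.2]
    · rw [dif_neg i.2]

def glueFun (F G : Finset (Fin N)) (x : {i // i ∈ F} → Fin d)
    (w : {i : {i // i ∉ F} // i.1 ∈ G} → Fin d) : {i // i ∈ G} → Fin d :=
  fun i => if h : i.1 ∈ F then x ⟨i.1, h⟩ else w ⟨⟨i.1, h⟩, i.2⟩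

theorem joinFun_splitComplEquiv_symm (F G : Finset (Fin N)) (hFG : F ⊆ G)
    (x : {i // i ∈ F} → Fin d) (w : {i : {i // i ∉ F} // i.1 ∈ G} → Fin d)
    (u : {i // i ∉ G} → Fin d) :
    joinFun F x ((splitComplEquiv F G hFG).symm (w, u)) = joinFun G (glueFun F G x w) u := by
  funext i
  by_cases hF : i ∈ F
  · simp [joinFun, glueFun, hF, hFG hF]
  · by_cases hG : i ∈ G <;> simp [joinFun, glueFun, splitComplEquiv, hF, hG]

theorem marginal_eq_sum_marginal_of_subset (F G : Finset (Fin N)) (hFG : F ⊆ G)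
    (χ : (Fin N → Fin d) → ℂ) (x y : {i // i ∈ F} → Fin d) :
    marginal F χ x y = ∑ w : {i : {i // i ∉ F} // i.1 ∈ G} → Fin d,
      marginal G χ (glueFun F G x w) (glueFun F G y w) := by
  rw [marginal, ← (splitComplEquiv F G hFG).symm.sum_comp, Fintype.sum_prod_type]
  simp only [joinFun_splitComplEquiv_symm, marginal]

theorem marginal_eq_of_subset {F G : Finset (Fin N)} (hFG : F ⊆ G)
    {φ ψ : (Fin N → Fin d) → ℂ} (h : marginal G φ = marginal G ψ) :
    marginal F φ = marginal F ψ := by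
  funext x y
  simp only [marginal_eq_sum_marginal_of_subset F G hFG, h]

end Subset

theorem gme_disconnected_not_UDP_general (N d : ℕ)
    (ψ : (Fin N → Fin d) → ℂ) (hψ : UnitVec ψ) (hGME : GME ψ)
    (𝓕 : Finset (Finset (Fin N)))
    (J : Finset (Fin N)) (hJne : J.Nonempty) (hJprop : J ≠ Finset.univ)
    (hcut : ∀ F ∈ 𝓕, F ⊆ J ∨ F ⊆ Jᶜ) :
    ∃ φ : (Fin N → Fin d) → ℂ, UnitVec φ ∧
      (∀ F ∈ 𝓕, marginal F φ = marginal F ψ) ∧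
      ∀ c : ℂ, φ ≠ c • ψ := by
  have hM : ∀ α β, cutMatrix J ψ ≠ vecMulVec α β := fun α β hαβ =>
    hGME J hJne hJprop ⟨α, β, fun x z => congrFun₂ hαβ x z⟩
  obtain ⟨U, hU, hUψ, hUne⟩ := exists_unitary_commute_ne_smul (cutMatrix J ψ) hM
  have hJ := marginal_ofCutMatrix_unitary_mul J ψ hU hUψ
  have hJc := marginal_compl_ofCutMatrix_unitary_mul J ψ hU
  refine ⟨ofCutMatrix J (U * cutMatrix J ψ), ?_, fun F hF => ?_, fun c hc => hUne c ?_⟩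
  · rwa [unitVec_iff_trace_marginal J, hJ, ← unitVec_iff_trace_marginal]
  · rcases hcut F hF with hFJ | hFJc
    · exact marginal_eq_of_subset hFJ hJ
    · exact marginal_eq_of_subset hFJc hJc
  · rw [← cutMatrix_smul, ← hc, cutMatrix_ofCutMatrix]

/-- If the hypergraph of `𝓕` is disconnected by a cut `J`, then a GME
pure state `ψ` is not `𝓕`-UDP: some unit vector shares all marginals over `𝓕` with `ψ`
but is not a scalar multiple of `ψ`. -/
theorem gme_disconnected_not_UDP (N d : ℕ) (hN : 2 ≤ N) (hd : 2 ≤ d)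
    (ψ : (Fin N → Fin d) → ℂ) (hψ : UnitVec ψ) (hGME : GME ψ)
    (𝓕 : Finset (Finset (Fin N)))
    (J : Finset (Fin N)) (hJne : J.Nonempty) (hJprop : J ≠ Finset.univ)
    (hcut : ∀ F ∈ 𝓕, F ⊆ J ∨ F ⊆ Jᶜ) :
    ∃ φ : (Fin N → Fin d) → ℂ, UnitVec φ ∧
      (∀ F ∈ 𝓕, marginal F φ = marginal F ψ) ∧
      ∀ c : ℂ, φ ≠ c • ψ :=
  gme_disconnected_not_UDP_general N d ψ hψ hGME 𝓕 J hJne hJprop hcut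
end

section
/- Let N, d, k, r be positive integers with 2k ≤ N and r ≥ 2, and let rows : Fin r → (Fin N → Fin d) be a packing array PA(r, N, d, k): for every subset T ⊆ Fin N with |T| = k, the map i ↦ (rows i) restricted to T is injective. Let a : Fin r → ℂ with a_i ≠ 0 for all i and ∑_i |a_i|² = 1, and let ψ : (Fin N → Fin d) → ℂ be the state with ψ(rows i) = a_i for each i and ψ(x) = 0 for x not in the image of rows. Then ψ is not UDP by its (N − k)-deck: there exists a unit vector φ : (Fin N → Fin d) → ℂ such that ρ_S(φ) = ρ_S(ψ) for every subset S ⊆ Fin N with |S| = N − k, and yet φ ≠ c • ψ for every scalar c : ℂ. -/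
/-!
Flip the sign of the coefficient of one row. For `|S| = N - k` the complement of `S` has `k`
columns, in which any two rows of the packing array differ; so in every term of `ρ_S` both
factors come from the same row and the sign cancels, while the flipped state is not a multiple
of `ψ` because a second row keeps its sign.
-/

open Finset

/-- `rows` is a packing array of strength `k`: in any `k` columns, every `k`-tuple
appears at most once. -/
def IsPackingArray {r N d : ℕ} (k : ℕ) (rows : Fin r → (Fin N → Fin d)) : Prop :=
  ∀ T : Finset (Fin N), T.card = k →
    Function.Injective (fun i : Fin r => fun j : {x // x ∈ T} => rows i j.1)

theorem IsPackingArray.injective {r N d k : ℕ} {rows : Fin r → Fin N → Fin d}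
    (hPA : IsPackingArray k rows) (hkN : k ≤ N) : Function.Injective rows := by
  obtain ⟨T, -, hT⟩ := exists_subset_card_eq (s := (univ : Finset (Fin N))) (by simpa using hkN)
  exact fun i j hij => hPA T hT (funext fun w => congrFun hij w.1)

theorem IsPackingArray.eq_of_eqOn_compl {r N d k : ℕ} {rows : Fin r → Fin N → Fin d}
    (hPA : IsPackingArray k rows) {S : Finset (Fin N)} (hS : Sᶜ.card = k) {i j : Fin r}
    (hij : ∀ w ∉ S, rows i w = rows j w) : i = j :=
  hPA Sᶜ hS (funext fun w => hij w.1 (mem_compl.mp w.2))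

theorem marginal_eq_of_norm_eq {N d : ℕ} (S : Finset (Fin N)) {φ ψ : (Fin N → Fin d) → ℂ}
    (hφψ : ∀ x, ‖φ x‖ = ‖ψ x‖)
    (hsupp : ∀ u v, ψ u ≠ 0 → ψ v ≠ 0 → (∀ w ∉ S, u w = v w) → u = v) :
    marginal S φ = marginal S ψ := by
  have hzero : ∀ x, ψ x = 0 → φ x = 0 := fun x hx => norm_eq_zero.mp (by rw [hφψ, hx, norm_zero])
  have hterm : ∀ u v : Fin N → Fin d, (∀ w ∉ S, u w = v w) →
      φ u * (starRingEnd ℂ) (φ v) = ψ u * (starRingEnd ℂ) (ψ v) := by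
    intro u v huv
    by_cases hu : ψ u = 0
    · simp [hu, hzero u hu]
    by_cases hv : ψ v = 0
    · simp [hv, hzero v hv]
    obtain rfl := hsupp u v hu hv huv
    rw [Complex.mul_conj', Complex.mul_conj', hφψ]
  funext x y
  exact sum_congr rfl fun z _ => hterm _ _ fun w hw => by simp [joinFun, hw]

section SignFlip

variable {α : Type*} [DecidableEq α] (ψ : α → ℂ) (x₀ : α)

theorem norm_update_neg_apply (x : α) : ‖Function.update ψ x₀ (-ψ x₀) x‖ = ‖ψ x‖ := by
  rcases eq_or_ne x x₀ with rfl | hx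
  · simp
  · rw [Function.update_of_ne hx]

variable {ψ x₀}

theorem update_neg_ne_smul (hx₀ : ψ x₀ ≠ 0) {x₁ : α} (hx₁ : ψ x₁ ≠ 0) (hne : x₁ ≠ x₀) (c : ℂ) :
    Function.update ψ x₀ (-ψ x₀) ≠ c • ψ := by
  intro h
  have hc : c = 1 := by
    have h₁ := congrFun h x₁
    rw [Function.update_of_ne hne, Pi.smul_apply, smul_eq_mul] at h₁
    exact (mul_eq_right₀ hx₁).mp h₁.symm
  have h₀ := congrFun h x₀
  rw [Function.update_self, hc, one_smul] at h₀
  exact hx₀ (CharZero.neg_eq_self_iff.mp h₀)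

end SignFlip

theorem packing_array_state_not_UDP_general (N d k r : ℕ)
    (hkN : 2 * k ≤ N) (hr : 2 ≤ r)
    (rows : Fin r → (Fin N → Fin d)) (hPA : IsPackingArray k rows)
    (a : Fin r → ℂ) (ha : ∀ i, a i ≠ 0) (hnorm : ∑ i, ‖a i‖ ^ 2 = 1)
    (ψ : (Fin N → Fin d) → ℂ)
    (hψrows : ∀ i, ψ (rows i) = a i)
    (hψzero : ∀ x : Fin N → Fin d, (∀ i, x ≠ rows i) → ψ x = 0) :
    ∃ φ : (Fin N → Fin d) → ℂ, UnitVec φ ∧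
      (∀ S : Finset (Fin N), S.card = N - k → marginal S φ = marginal S ψ) ∧
      ∀ c : ℂ, φ ≠ c • ψ := by
  have hinj : Function.Injective rows := hPA.injective (by omega)
  have hsupp : ∀ x, ψ x ≠ 0 → ∃ i, rows i = x := fun x hx => by
    by_contra! h
    exact hx (hψzero x fun i => (h i).symm)
  let i₀ : Fin r := ⟨0, by omega⟩
  let i₁ : Fin r := ⟨1, by omega⟩
  refine ⟨Function.update ψ (rows i₀) (-ψ (rows i₀)), ?_, fun S hS => ?_, ?_⟩
  · unfold UnitVec
    simp_rw [norm_update_neg_apply, ← hnorm, ← hψrows]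
    refine (Fintype.sum_of_injective rows hinj _ _ (fun x hx => ?_) fun _ => rfl).symm
    rw [hψzero x fun i hi => hx ⟨i, hi.symm⟩, norm_zero, zero_pow two_ne_zero]
  · have hSc : Sᶜ.card = k := by rw [card_compl, hS, Fintype.card_fin]; omega
    refine marginal_eq_of_norm_eq S (norm_update_neg_apply ψ _) fun u v hu hv huv => ?_
    obtain ⟨i, rfl⟩ := hsupp u hu
    obtain ⟨j, rfl⟩ := hsupp v hv
    rw [hPA.eq_of_eqOn_compl hSc huv]
  · refine update_neg_ne_smul (x₁ := rows i₁) ?_ ?_ (hinj.ne (by simp [i₀, i₁, Fin.ext_iff]))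
    · rw [hψrows]; exact ha i₀
    · rw [hψrows]; exact ha i₁

/-- The state built from a packing array `PA(r, N, d, k)` with
nonzero coefficients is not UDP by its `(N - k)`-deck. -/
theorem packing_array_state_not_UDP (N d k r : ℕ)
    (hN : 0 < N) (hd : 0 < d) (hk : 0 < k) (hkN : 2 * k ≤ N) (hr : 2 ≤ r)
    (rows : Fin r → (Fin N → Fin d)) (hPA : IsPackingArray k rows)
    (a : Fin r → ℂ) (ha : ∀ i, a i ≠ 0) (hnorm : ∑ i, ‖a i‖ ^ 2 = 1)
    (ψ : (Fin N → Fin d) → ℂ)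
    (hψrows : ∀ i, ψ (rows i) = a i)
    (hψzero : ∀ x : Fin N → Fin d, (∀ i, x ≠ rows i) → ψ x = 0) :
    ∃ φ : (Fin N → Fin d) → ℂ, UnitVec φ ∧
      (∀ S : Finset (Fin N), S.card = N - k → marginal S φ = marginal S ψ) ∧
      ∀ c : ℂ, φ ≠ c • ψ :=
  packing_array_state_not_UDP_general N d k r hkN hr rows hPA a ha hnorm ψ hψrows hψzero
end

section
/- Let N, d, k be positive integers with d ≥ 2 and 2k ≤ N, let r = d^k, and let rows : Fin r → (Fin N → Fin d) be an orthogonal array OA(r, N, d, k) of index 1: for every subset T ⊆ Fin N with |T| = k, the map i ↦ (rows i) restricted to T is a bijection onto the set of all functions {i // i ∈ T} → Fin d. Let a : Fin r → ℂ with a_i ≠ 0 for all i and ∑_i |a_i|² = 1, and let ψ : (Fin N → Fin d) → ℂ be the generalized QOA state with ψ(rows i) = a_i for each i and ψ(x) = 0 for x not in the image of rows. Then ψ cannot be UDP by its (N − k)-deck: there exists a unit vector φ : (Fin N → Fin d) → ℂ such that ρ_S(φ) = ρ_S(ψ) for every subset S ⊆ Fin N with |S| = N − k, and yet φ ≠ c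 • ψ for every scalar c : ℂ. -/
/-! A state supported on the rows of an index-one orthogonal array of strength `k` has diagonal
`(N - k)`-marginals: two distinct rows already differ on the `k` traced-out parties, so every
cross term of the partial trace vanishes and each marginal depends only on `|ψ|²`. Flipping the
sign of a single coefficient therefore keeps all these marginals, yet it is not a global phase
because the array has at least two rows with nonzero coefficients. -/

open Finset

/-- `rows` is an orthogonal array `OA(d^k, N, d, k)` of index 1: in any `k` columns,
every `k`-tuple over `Fin d` appears exactly once, i.e. each restriction map is a
bijection onto the functions on those columns. -/
def IsOrthogonalArrayIndexOne {N d k : ℕ} (rows : Fin (d ^ k) → (Fin N → Fin d)) : Prop :=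
  ∀ T : Finset (Fin N), T.card = k →
    Function.Bijective (fun i : Fin (d ^ k) => fun j : {x // x ∈ T} => rows i j.1)

section Marginal

variable {N d : ℕ}

theorem joinFun_apply_of_notMem (S : Finset (Fin N)) (x : {i // i ∈ S} → Fin d)
    (z : {i // i ∉ S} → Fin d) {j : Fin N} (hj : j ∉ S) : joinFun S x z j = z ⟨j, hj⟩ :=
  dif_neg hj

theorem unitVec_mul_iff_of_norm_eq_one {ψ ω : (Fin N → Fin d) → ℂ} (hω : ∀ x, ‖ω x‖ = 1) :
    UnitVec (fun x => ω x * ψ x) ↔ UnitVec ψ := by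
  simp only [UnitVec, norm_mul, hω, one_mul]

theorem unitVec_of_injective {ι : Type*} [Fintype ι] {e : ι → (Fin N → Fin d)}
    (he : Function.Injective e) {a : ι → ℂ} (ha : ∑ i, ‖a i‖ ^ 2 = 1)
    {ψ : (Fin N → Fin d) → ℂ} (hψe : ∀ i, ψ (e i) = a i)
    (hψzero : ∀ x, (∀ i, x ≠ e i) → ψ x = 0) : UnitVec ψ := by
  rw [UnitVec, ← ha]
  refine (Fintype.sum_of_injective e he _ _ (fun x hx => ?_) fun i => by rw [hψe]).symm
  rw [hψzero x fun i hi => hx ⟨i, hi.symm⟩, norm_zero, sq, zero_mul]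

theorem marginal_mul_of_norm_eq_one {S : Finset (Fin N)} {ψ ω : (Fin N → Fin d) → ℂ}
    (hsep : ∀ u v, ψ u ≠ 0 → ψ v ≠ 0 → (∀ j ∉ S, u j = v j) → u = v)
    (hω : ∀ x, ‖ω x‖ = 1) :
    marginal S (fun x => ω x * ψ x) = marginal S ψ := by
  funext x y
  refine sum_congr rfl fun z _ => ?_
  by_cases hx : ψ (joinFun S x z) = 0
  · simp [hx]
  by_cases hy : ψ (joinFun S y z) = 0
  · simp [hy]
  have hxy : joinFun S x z = joinFun S y z := hsep _ _ hx hy fun j hj => by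
    rw [joinFun_apply_of_notMem S x z hj, joinFun_apply_of_notMem S y z hj]
  have hωω : ω (joinFun S y z) * starRingEnd ℂ (ω (joinFun S y z)) = 1 := by
    rw [Complex.mul_conj, Complex.normSq_eq_norm_sq, hω, one_pow, Complex.ofReal_one]
  rw [hxy, map_mul]
  linear_combination ψ (joinFun S y z) * starRingEnd ℂ (ψ (joinFun S y z)) * hωω

theorem mul_ne_smul_of_ne {ψ ω : (Fin N → Fin d) → ℂ} {u v : Fin N → Fin d}
    (hu : ψ u ≠ 0) (hv : ψ v ≠ 0) (huv : ω u ≠ ω v) (c : ℂ) :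
    (fun x => ω x * ψ x) ≠ c • ψ := by
  intro h
  have hcu : ω u * ψ u = c * ψ u := congrFun h u
  have hcv : ω v * ψ v = c * ψ v := congrFun h v
  exact huv ((mul_right_cancel₀ hu hcu).trans (mul_right_cancel₀ hv hcv).symm)

end Marginal

namespace IsOrthogonalArrayIndexOne

variable {N d k : ℕ} {rows : Fin (d ^ k) → (Fin N → Fin d)}

theorem eq_of_eqOn (hOA : IsOrthogonalArrayIndexOne rows) {T : Finset (Fin N)}
    (hT : T.card = k) {i i' : Fin (d ^ k)} (h : ∀ j ∈ T, rows i j = rows i' j) : i = i' :=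
  (hOA T hT).1 (funext fun j => h j.1 j.2)

theorem injective (hOA : IsOrthogonalArrayIndexOne rows) (hkN : k ≤ N) :
    Function.Injective rows := by
  obtain ⟨T, -, hT⟩ := exists_subset_card_eq (s := (univ : Finset (Fin N))) (n := k)
    (by simpa using hkN)
  exact fun i i' h => hOA.eq_of_eqOn hT fun j _ => by rw [h]

theorem eq_of_eqOn_compl {ψ : (Fin N → Fin d) → ℂ} (hOA : IsOrthogonalArrayIndexOne rows)
    (hψzero : ∀ x, (∀ i, x ≠ rows i) → ψ x = 0) {S : Finset (Fin N)} (hS : Sᶜ.card = k)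
    (u v : Fin N → Fin d) (hu : ψ u ≠ 0) (hv : ψ v ≠ 0) (huv : ∀ j ∉ S, u j = v j) :
    u = v := by
  obtain ⟨i, rfl⟩ : ∃ i, u = rows i := by
    by_contra! h
    exact hu (hψzero u h)
  obtain ⟨i', rfl⟩ : ∃ i, v = rows i := by
    by_contra! h
    exact hv (hψzero v h)
  exact congrArg rows (hOA.eq_of_eqOn hS fun j hj => huv j (mem_compl.1 hj))

end IsOrthogonalArrayIndexOne

theorem generalized_QOA_state_not_UDP_general (N d k : ℕ)
    (hd : 2 ≤ d) (hk : 0 < k) (hkN : 2 * k ≤ N)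
    (rows : Fin (d ^ k) → (Fin N → Fin d)) (hOA : IsOrthogonalArrayIndexOne rows)
    (a : Fin (d ^ k) → ℂ) (ha : ∀ i, a i ≠ 0)
    (hnorm : ∑ i, ‖a i‖ ^ 2 = 1)
    (ψ : (Fin N → Fin d) → ℂ)
    (hψrows : ∀ i, ψ (rows i) = a i)
    (hψzero : ∀ x : Fin N → Fin d, (∀ i, x ≠ rows i) → ψ x = 0) :
    ∃ φ : (Fin N → Fin d) → ℂ, UnitVec φ ∧
      (∀ S : Finset (Fin N), S.card = N - k → marginal S φ = marginal S ψ) ∧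
      ∀ c : ℂ, φ ≠ c • ψ := by
  have hinj := hOA.injective (by omega)
  obtain ⟨i₀, i₁, hi⟩ := Fintype.exists_pair_of_one_lt_card
    (by simpa using Nat.one_lt_pow hk.ne' hd : 1 < Fintype.card (Fin (d ^ k)))
  set ω : (Fin N → Fin d) → ℂ := fun x => if x = rows i₀ then -1 else 1
  have hω : ∀ x, ‖ω x‖ = 1 := fun x => by by_cases h : x = rows i₀ <;> simp [ω, h]
  have hω₁ : ω (rows i₁) = 1 := if_neg fun h => hi (hinj h).symm
  refine ⟨fun x => ω x * ψ x,
    (unitVec_mul_iff_of_norm_eq_one hω).2 (unitVec_of_injective hinj hnorm hψrows hψzero),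
    fun S hS => marginal_mul_of_norm_eq_one (hOA.eq_of_eqOn_compl hψzero ?_) hω,
    mul_ne_smul_of_ne (u := rows i₀) (v := rows i₁) ?_ ?_ ?_⟩
  · rw [card_compl, Fintype.card_fin]
    omega
  · exact hψrows i₀ ▸ ha i₀
  · exact hψrows i₁ ▸ ha i₁
  · rw [hω₁, show ω (rows i₀) = -1 from if_pos rfl]
    norm_num

/-- The generalized QOA state built from an orthogonal array
`OA(d^k, N, d, k)` of index 1 with nonzero coefficients cannot be UDP by its
`(N - k)`-deck. -/
theorem generalized_QOA_state_not_UDP (N d k : ℕ)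
    (hN : 0 < N) (hd : 2 ≤ d) (hk : 0 < k) (hkN : 2 * k ≤ N)
    (rows : Fin (d ^ k) → (Fin N → Fin d)) (hOA : IsOrthogonalArrayIndexOne rows)
    (a : Fin (d ^ k) → ℂ) (ha : ∀ i, a i ≠ 0)
    (hnorm : ∑ i, ‖a i‖ ^ 2 = 1)
    (ψ : (Fin N → Fin d) → ℂ)
    (hψrows : ∀ i, ψ (rows i) = a i)
    (hψzero : ∀ x : Fin N → Fin d, (∀ i, x ≠ rows i) → ψ x = 0) :
    ∃ φ : (Fin N → Fin d) → ℂ, UnitVec φ ∧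
      (∀ S : Finset (Fin N), S.card = N - k → marginal S φ = marginal S ψ) ∧
      ∀ c : ℂ, φ ≠ c • ψ :=
  generalized_QOA_state_not_UDP_general N d k hd hk hkN rows hOA a ha hnorm ψ hψrows hψzero
end

section
/- Let N, d, k, r be positive integers with k ≤ N, and let rows : Fin r → (Fin N → Fin d) satisfy the packing property of strength k: for every subset T ⊆ Fin N with |T| = k, the map i ↦ (rows i) restricted to T is injective. Let a : Fin r → ℂ and let ψ : (Fin N → Fin d) → ℂ be the state with ψ(rows i) = a_i and ψ(x) = 0 for x outside the image of rows. Then for every subset S ⊆ Fin N with |S| = N − k, the marginal ρ_S(ψ) is diagonal in the computational basis: for all x, y : {i // i ∈ S} → Fin d, ρ_S(ψ) x y = 0 if x ≠ y, and ρ_S(ψ) x x = ∑_{i : (rows i)|_S = x} |a_i|². -/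
open Finset

/-! By the packing property, restricting the rows to the `k` parties outside `S` is injective,
so for each assignment `z` of those parties at most one row extends it. The sum over `z` defining
`ρ_S(ψ) x y` therefore collapses to a sum over rows, in which row `i` contributes
`a i * conj (a i)` exactly when its restriction to `S` equals both `x` and `y`. -/

section PackingMarginal

variable {N d : ℕ} (S : Finset (Fin N))

theorem joinFun_eq_iff (x : {i // i ∈ S} → Fin d) (z : {i // i ∉ S} → Fin d)
    (w : Fin N → Fin d) :
    joinFun S x z = w ↔ S.restrict w = x ∧ (fun j : {i // i ∉ S} => w j) = z := by
  constructor
  · rintro rfl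
    exact ⟨funext fun j => dif_pos j.2, funext fun j => dif_neg j.2⟩
  · rintro ⟨rfl, rfl⟩
    funext i
    by_cases hi : i ∈ S <;> simp [joinFun, hi]

theorem IsPackingArray.injective_restrict_compl {k r : ℕ} {rows : Fin r → Fin N → Fin d}
    (hPA : IsPackingArray k rows) (hkN : k ≤ N) (hS : S.card = N - k) :
    Function.Injective fun i (j : {v // v ∉ S}) => rows i j := by
  have hcard : Sᶜ.card = k := by
    rw [card_compl, hS, Fintype.card_fin]
    omega
  intro i i' h
  exact hPA Sᶜ hcard (funext fun j => congrFun h ⟨j, mem_compl.mp j.2⟩)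

section SupportedOnRows

variable {ι : Type*} {S} {rows : ι → Fin N → Fin d} {a : ι → ℂ} {ψ : (Fin N → Fin d) → ℂ}

theorem apply_joinFun_of_notMem_range (hψzero : ∀ w, (∀ i, w ≠ rows i) → ψ w = 0)
    (x : {i // i ∈ S} → Fin d) {z : {i // i ∉ S} → Fin d}
    (hz : z ∉ Set.range fun i (j : {v // v ∉ S}) => rows i j) :
    ψ (joinFun S x z) = 0 := by
  refine hψzero _ fun i hi => hz ⟨i, ?_⟩
  exact ((joinFun_eq_iff S x z (rows i)).mp hi).2

theorem apply_joinFun_restrict_compl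
    (hinj : Function.Injective fun i (j : {v // v ∉ S}) => rows i j)
    (hψrows : ∀ i, ψ (rows i) = a i) (hψzero : ∀ w, (∀ i, w ≠ rows i) → ψ w = 0)
    (x : {i // i ∈ S} → Fin d) (i : ι) :
    ψ (joinFun S x fun j => rows i j) = if S.restrict (rows i) = x then a i else 0 := by
  split_ifs with hx
  · rw [(joinFun_eq_iff S _ _ (rows i)).mpr ⟨hx, rfl⟩, hψrows]
  · refine hψzero _ fun i' hi' => hx ?_
    obtain ⟨hx', hz⟩ := (joinFun_eq_iff S _ _ _).mp hi'
    rwa [hinj hz] at hx'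

theorem marginal_eq_sum_rows [Fintype ι]
    (hinj : Function.Injective fun i (j : {v // v ∉ S}) => rows i j)
    (hψrows : ∀ i, ψ (rows i) = a i) (hψzero : ∀ w, (∀ i, w ≠ rows i) → ψ w = 0)
    (x y : {i // i ∈ S} → Fin d) :
    marginal S ψ x y = ∑ i, (if S.restrict (rows i) = x then a i else 0) *
      starRingEnd ℂ (if S.restrict (rows i) = y then a i else 0) := by
  refine (Fintype.sum_of_injective _ hinj _ _ (fun z hz => ?_) fun i => ?_).symm
  · rw [apply_joinFun_of_notMem_range hψzero x hz, zero_mul]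
  · rw [apply_joinFun_restrict_compl hinj hψrows hψzero,
      apply_joinFun_restrict_compl hinj hψrows hψzero]

end SupportedOnRows

end PackingMarginal

theorem packing_array_marginal_diagonal_general (N d k r : ℕ)
    (hkN : k ≤ N)
    (rows : Fin r → (Fin N → Fin d)) (hPA : IsPackingArray k rows)
    (a : Fin r → ℂ)
    (ψ : (Fin N → Fin d) → ℂ)
    (hψrows : ∀ i, ψ (rows i) = a i)
    (hψzero : ∀ x : Fin N → Fin d, (∀ i, x ≠ rows i) → ψ x = 0) :
    ∀ S : Finset (Fin N), S.card = N - k →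
      (∀ x y : {i // i ∈ S} → Fin d, x ≠ y → marginal S ψ x y = 0) ∧
      (∀ x : {i // i ∈ S} → Fin d,
        marginal S ψ x x =
          ((∑ i ∈ Finset.univ.filter
              (fun i : Fin r => (fun j : {v // v ∈ S} => rows i j.1) = x),
            ‖a i‖ ^ 2 : ℝ) : ℂ)) := by
  intro S hS
  have hinj := hPA.injective_restrict_compl S hkN hS
  refine ⟨fun x y hxy => ?_, fun x => ?_⟩
  · rw [marginal_eq_sum_rows hinj hψrows hψzero]
    refine sum_eq_zero fun i _ => ?_
    by_cases hx : S.restrict (rows i) = x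
    · rw [if_neg fun hy => hxy (hx.symm.trans hy), map_zero, mul_zero]
    · rw [if_neg hx, zero_mul]
  · rw [marginal_eq_sum_rows hinj hψrows hψzero, Complex.ofReal_sum, sum_filter]
    refine sum_congr rfl fun i _ => ?_
    change _ = if S.restrict (rows i) = x then ((‖a i‖ ^ 2 : ℝ) : ℂ) else 0
    split_ifs
    · rw [Complex.mul_conj, Complex.normSq_eq_norm_sq]
    · rw [zero_mul]

/-- For a state supported on the rows of a packing array of
strength `k`, every `(N - k)`-body marginal is diagonal in the computational
basis, with diagonal entries the sums of `|aᵢ|²` over rows restricting to the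
given tuple. -/
theorem packing_array_marginal_diagonal (N d k r : ℕ)
    (hN : 0 < N) (hd : 0 < d) (hk : 0 < k) (hr : 0 < r) (hkN : k ≤ N)
    (rows : Fin r → (Fin N → Fin d)) (hPA : IsPackingArray k rows)
    (a : Fin r → ℂ)
    (ψ : (Fin N → Fin d) → ℂ)
    (hψrows : ∀ i, ψ (rows i) = a i)
    (hψzero : ∀ x : Fin N → Fin d, (∀ i, x ≠ rows i) → ψ x = 0) :
    ∀ S : Finset (Fin N), S.card = N - k →
      (∀ x y : {i // i ∈ S} → Fin d, x ≠ y → marginal S ψ x y = 0) ∧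
      (∀ x : {i // i ∈ S} → Fin d,
        marginal S ψ x x =
          ((∑ i ∈ Finset.univ.filter
              (fun i : Fin r => (fun j : {v // v ∈ S} => rows i j.1) = x),
            ‖a i‖ ^ 2 : ℝ) : ℂ)) :=
  packing_array_marginal_diagonal_general N d k r hkN rows hPA a ψ hψrows hψzero
end

section
/- Let m, dA, dB be positive integers, let u : Fin m → (Fin dA → ℂ) and w : Fin m → (Fin dB → ℂ) be orthonormal families (∑_x u_i(x) · conj(u_j(x)) = δ_{ij} and ∑_y w_i(y) · conj(w_j(y)) = δ_{ij}), and let λ : Fin m → ℝ be strictly positive, pairwise distinct, with ∑_i λ_i = 1. Define the bipartite pure state ψ : Fin dA × Fin dB → ℂ by ψ(x, y) = ∑_i √(λ_i) · u_i(x) · w_i(y). If a unit vector φ : Fin dA × Fin dB → ℂ satisfies ∑_y φ(x, y) · conj(φ(x', y)) = ∑_y ψ(x, y) · conj(ψ(x', y)) for all x, x' ∈ Fin dA, and ∑_x φ(x, y) · conj(φ(x, y')) = ∑_x ψ(x, y) · conj(ψ(x, y')) for all y, y' ∈ Fin dB, then there exist phases θ : Fin m → ℝ such that φ(x, y) = ∑_i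 exp(√(−1)·θ_i) · √(λ_i) · u_i(x) · w_i(y) for all x, y. -/
/-!
Write `Ψ = V D W` with `V` an isometry (columns `u i`), `W` a co-isometry (rows `w i`) and
`D = diag √λ`. Equal marginals mean `Φ Φᴴ = V D² Vᴴ` and `Φᴴ Φ = Wᴴ D² W`. The first forces the
columns of `Φ` into the range of `V`, the second its rows into the range of `Wᴴ`, so `Φ = V A W`
with `A = Vᴴ Φ Wᴴ`, and then `A Aᴴ = D² = Aᴴ A`. Hence `A` commutes with `D²`, whose entries are
distinct, so `A` is diagonal with `|A i i|² = λ i`, i.e. `A i i = e^{iθᵢ} √λᵢ`.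
-/

namespace Matrix

variable {R : Type*} {m n p : Type*} [Fintype m] [DecidableEq m]

theorem mul_conjTranspose_mul_eq_self_of_mul_conjTranspose_eq [Fintype n] [Fintype p]
    [Ring R] [PartialOrder R] [StarRing R] [StarOrderedRing R] [NoZeroDivisors R]
    {V : Matrix n m R} {M : Matrix m m R} {Φ : Matrix n p R}
    (hV : Vᴴ * V = 1) (hΦ : Φ * Φᴴ = V * M * Vᴴ) : V * Vᴴ * Φ = Φ := by
  classical
  have hker : (Φ * Φᴴ) * (1 - V * Vᴴ) = 0 := by
    rw [hΦ, Matrix.mul_sub, Matrix.mul_one, Matrix.mul_assoc (V * M), ← Matrix.mul_assoc Vᴴ,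
      hV, Matrix.one_mul, sub_self]
  rw [self_mul_conjTranspose_mul_eq_zero, Matrix.mul_sub, Matrix.mul_one, sub_eq_zero] at hker
  simpa [Matrix.mul_assoc] using congr_arg conjTranspose hker.symm

theorem mul_diagonal_mul_apply [Semiring R] {V : Matrix n m R} {W : Matrix m p R} (s : m → R)
    (x : n) (y : p) : (V * diagonal s * W) x y = ∑ i, V x i * s i * W i y := by
  simp only [mul_apply (M := V * diagonal s), mul_diagonal]

variable [CommRing R] [StarRing R]

theorem mul_diagonal_mul_mul_conjTranspose [Fintype p] {V : Matrix n m R} {W : Matrix m p R}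
    (s : m → R) (hW : W * Wᴴ = 1) :
    (V * diagonal s * W) * (V * diagonal s * W)ᴴ =
      V * diagonal (fun i => s i * star (s i)) * Vᴴ := by
  simp only [conjTranspose_mul, diagonal_conjTranspose, Matrix.mul_assoc]
  rw [← Matrix.mul_assoc W, hW, Matrix.one_mul, ← Matrix.mul_assoc (diagonal s),
    diagonal_mul_diagonal]
  rfl

theorem conjTranspose_mul_mul_diagonal_mul [Fintype n] {V : Matrix n m R} {W : Matrix m p R}
    (s : m → R) (hV : Vᴴ * V = 1) :
    (V * diagonal s * W)ᴴ * (V * diagonal s * W) =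
      Wᴴ * diagonal (fun i => s i * star (s i)) * W := by
  simp only [conjTranspose_mul, diagonal_conjTranspose, Matrix.mul_assoc]
  rw [← Matrix.mul_assoc Vᴴ, hV, Matrix.one_mul, ← Matrix.mul_assoc (diagonal _),
    diagonal_mul_diagonal]
  simp_rw [mul_comm]
  rfl

theorem isDiag_of_mul_conjTranspose_eq_diagonal [NoZeroDivisors R] {A : Matrix m m R}
    {d : m → R} (hd : Function.Injective d)
    (hA : A * Aᴴ = diagonal d) (hA' : Aᴴ * A = diagonal d) : A.IsDiag := by
  intro i j hij
  have hcomm : diagonal d * A = A * diagonal d := by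
    nth_rw 1 [← hA]
    rw [Matrix.mul_assoc, hA']
  have hij' : (d i - d j) * A i j = 0 := by
    have := congr_fun (congr_fun hcomm i) j
    rw [diagonal_mul, mul_diagonal] at this
    rw [sub_mul, this, mul_comm, sub_self]
  exact (mul_eq_zero.mp hij').resolve_left (sub_ne_zero.mpr (hd.ne hij))

theorem exists_eq_mul_diagonal_mul_of_gram_eq [Fintype n] [Fintype p]
    [PartialOrder R] [StarOrderedRing R] [NoZeroDivisors R]
    {V : Matrix n m R} {W : Matrix m p R} {s : m → R}
    (hV : Vᴴ * V = 1) (hW : W * Wᴴ = 1) (hs : Function.Injective fun i => s i * star (s i))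
    {Φ : Matrix n p R}
    (hA : Φ * Φᴴ = (V * diagonal s * W) * (V * diagonal s * W)ᴴ)
    (hB : Φᴴ * Φ = (V * diagonal s * W)ᴴ * (V * diagonal s * W)) :
    ∃ c : m → R, (∀ i, c i * star (c i) = s i * star (s i)) ∧ Φ = V * diagonal c * W := by
  rw [mul_diagonal_mul_mul_conjTranspose s hW] at hA
  rw [conjTranspose_mul_mul_diagonal_mul s hV] at hB
  set D := diagonal fun i => s i * star (s i)
  have hΦV : V * Vᴴ * Φ = Φ := mul_conjTranspose_mul_eq_self_of_mul_conjTranspose_eq hV hA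
  have hΦW : Φ * Wᴴ * W = Φ := by
    have := mul_conjTranspose_mul_eq_self_of_mul_conjTranspose_eq (V := Wᴴ) (M := D) (Φ := Φᴴ)
      (by rw [conjTranspose_conjTranspose, hW]) (by simp only [conjTranspose_conjTranspose, hB])
    simpa [Matrix.mul_assoc] using congr_arg conjTranspose this
  set A := Vᴴ * Φ * Wᴴ
  have hAA : A * Aᴴ = D := calc
    A * Aᴴ = Vᴴ * (Φ * Wᴴ * W * Φᴴ) * V := by
      simp only [A, conjTranspose_mul, conjTranspose_conjTranspose, Matrix.mul_assoc]
    _ = Vᴴ * V * D * (Vᴴ * V) := by rw [hΦW, hA]; simp only [Matrix.mul_assoc]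
    _ = D := by rw [hV, Matrix.one_mul, Matrix.mul_one]
  have hAA' : Aᴴ * A = D := calc
    Aᴴ * A = W * (Φᴴ * (V * Vᴴ * Φ)) * Wᴴ := by
      simp only [A, conjTranspose_mul, conjTranspose_conjTranspose, Matrix.mul_assoc]
    _ = W * Wᴴ * D * (W * Wᴴ) := by rw [hΦV, hB]; simp only [Matrix.mul_assoc]
    _ = D := by rw [hW, Matrix.one_mul, Matrix.mul_one]
  have hdiag := isDiag_of_mul_conjTranspose_eq_diagonal hs hAA hAA'
  refine ⟨A.diag, fun i => ?_, ?_⟩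
  · rw [← hdiag.diagonal_diag, diagonal_conjTranspose, diagonal_mul_diagonal] at hAA
    exact congr_fun (diagonal_injective hAA) i
  · rw [hdiag.diagonal_diag]
    calc Φ = V * Vᴴ * Φ * Wᴴ * W := by rw [hΦV, hΦW]
      _ = V * A * W := by simp only [A, Matrix.mul_assoc]

end Matrix

namespace Complex

open ComplexConjugate

theorem norm_eq_of_mul_conj_eq {z w : ℂ} (h : z * conj z = w * conj w) : ‖z‖ = ‖w‖ := by
  rw [mul_conj, mul_conj, ofReal_inj] at h
  rw [norm_def, norm_def, h]

theorem eq_exp_arg_mul_of_mul_conj_eq {z : ℂ} {r : ℝ} (hr : 0 ≤ r)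
    (h : z * conj z = r * conj (r : ℂ)) : z = exp (I * arg z) * r := by
  have hz : ‖z‖ = r := by rw [norm_eq_of_mul_conj_eq h, norm_real, Real.norm_of_nonneg hr]
  rw [mul_comm, mul_comm I, ← hz, norm_mul_exp_arg_mul_I]

end Complex

open Matrix

theorem bipartite_same_marginals_implies_phases_general (m dA dB : ℕ)
    (u : Fin m → Fin dA → ℂ) (w : Fin m → Fin dB → ℂ)
    (hu : ∀ i j, ∑ x, u i x * (starRingEnd ℂ) (u j x) = if i = j then 1 else 0)
    (hw : ∀ i j, ∑ y, w i y * (starRingEnd ℂ) (w j y) = if i = j then 1 else 0)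
    (lam : Fin m → ℝ) (hpos : ∀ i, 0 < lam i)
    (hdist : Function.Injective lam)
    (ψ : Fin dA × Fin dB → ℂ)
    (hψ : ∀ x y, ψ (x, y) = ∑ i, (Real.sqrt (lam i) : ℂ) * u i x * w i y)
    (φ : Fin dA × Fin dB → ℂ)
    (hA : ∀ x x' : Fin dA,
      ∑ y, φ (x, y) * (starRingEnd ℂ) (φ (x', y)) =
      ∑ y, ψ (x, y) * (starRingEnd ℂ) (ψ (x', y)))
    (hB : ∀ y y' : Fin dB,
      ∑ x, φ (x, y) * (starRingEnd ℂ) (φ (x, y')) =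
      ∑ x, ψ (x, y) * (starRingEnd ℂ) (ψ (x, y'))) :
    ∃ θ : Fin m → ℝ, ∀ x y,
      φ (x, y) = ∑ i, Complex.exp (Complex.I * (θ i : ℂ)) *
        (Real.sqrt (lam i) : ℂ) * u i x * w i y := by
  let V : Matrix (Fin dA) (Fin m) ℂ := (of u)ᵀ
  let W : Matrix (Fin m) (Fin dB) ℂ := of w
  let s : Fin m → ℂ := fun i => (Real.sqrt (lam i) : ℂ)
  let Φ : Matrix (Fin dA) (Fin dB) ℂ := of fun x y => φ (x, y)
  let Ψ : Matrix (Fin dA) (Fin dB) ℂ := of fun x y => ψ (x, y)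
  have hV : Vᴴ * V = 1 := by
    ext i j
    simpa [V, mul_apply, one_apply, mul_comm, eq_comm] using hu j i
  have hW : W * Wᴴ = 1 := by
    ext i j
    simpa [W, mul_apply, one_apply] using hw i j
  have hΨ : Ψ = V * diagonal s * W := by
    ext x y
    simp only [Ψ, of_apply, hψ, mul_diagonal_mul_apply, V, W, s, transpose_apply,
      mul_comm (u _ x)]
  have hs : Function.Injective fun i => s i * star (s i) := by
    have hs_mul_star : ∀ i, s i * star (s i) = lam i := fun i => by
      simp [s, ← Complex.ofReal_mul, Real.mul_self_sqrt (hpos i).le]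
    simp only [hs_mul_star]
    exact Complex.ofReal_injective.comp hdist
  have hΦA : Φ * Φᴴ = Ψ * Ψᴴ := by
    ext x x'
    simpa [Φ, Ψ, mul_apply] using hA x x'
  have hΦB : Φᴴ * Φ = Ψᴴ * Ψ := by
    ext y' y
    simpa [Φ, Ψ, mul_apply, mul_comm] using hB y y'
  rw [hΨ] at hΦA hΦB
  open scoped ComplexOrder in
  obtain ⟨c, hc, hΦ⟩ := exists_eq_mul_diagonal_mul_of_gram_eq hV hW hs hΦA hΦB
  refine ⟨fun i => Complex.arg (c i), fun x y => ?_⟩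
  rw [show φ (x, y) = Φ x y from rfl, hΦ, mul_diagonal_mul_apply]
  refine Finset.sum_congr rfl fun i _ => ?_
  nth_rw 1 [Complex.eq_exp_arg_mul_of_mul_conj_eq (Real.sqrt_nonneg (lam i)) (hc i)]
  simp only [V, W, transpose_apply, of_apply]
  ring

/-- Let `ψ` be a bipartite pure state with Schmidt decomposition
`ψ(x,y) = ∑ i, √(λ i) · u i x · w i y`, where `(u i)` and `(w i)` are orthonormal
families and the Schmidt spectrum `λ` is strictly positive, pairwise distinct, and
sums to 1. Then any unit vector `φ` sharing both one-sided marginals with `ψ`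
differs from `ψ` only by phases on the Schmidt terms. -/
theorem bipartite_same_marginals_implies_phases (m dA dB : ℕ)
    (hm : 0 < m) (hdA : 0 < dA) (hdB : 0 < dB)
    (u : Fin m → Fin dA → ℂ) (w : Fin m → Fin dB → ℂ)
    (hu : ∀ i j, ∑ x, u i x * (starRingEnd ℂ) (u j x) = if i = j then 1 else 0)
    (hw : ∀ i j, ∑ y, w i y * (starRingEnd ℂ) (w j y) = if i = j then 1 else 0)
    (lam : Fin m → ℝ) (hpos : ∀ i, 0 < lam i)
    (hdist : Function.Injective lam) (hsum : ∑ i, lam i = 1)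
    (ψ : Fin dA × Fin dB → ℂ)
    (hψ : ∀ x y, ψ (x, y) = ∑ i, (Real.sqrt (lam i) : ℂ) * u i x * w i y)
    (φ : Fin dA × Fin dB → ℂ)
    (hφunit : ∑ p, ‖φ p‖ ^ 2 = 1)
    (hA : ∀ x x' : Fin dA,
      ∑ y, φ (x, y) * (starRingEnd ℂ) (φ (x', y)) =
      ∑ y, ψ (x, y) * (starRingEnd ℂ) (ψ (x', y)))
    (hB : ∀ y y' : Fin dB,
      ∑ x, φ (x, y) * (starRingEnd ℂ) (φ (x, y')) =
      ∑ x, ψ (x, y) * (starRingEnd ℂ) (ψ (x, y'))) :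
    ∃ θ : Fin m → ℝ, ∀ x y,
      φ (x, y) = ∑ i, Complex.exp (Complex.I * (θ i : ℂ)) *
        (Real.sqrt (lam i) : ℂ) * u i x * w i y :=
  bipartite_same_marginals_implies_phases_general m dA dB u w hu hw lam hpos hdist ψ hψ φ hA hB
end

section
/- Let d ≥ 2 and n ≥ 2 be integers, and for an integer a with 1 ≤ a ≤ n − 1 define f(a) = (d^a · (d^a − 1) / 2) · (d^{2(n−a)} − 1) + (d^{n−a} · (d^{n−a} − 1) / 2) · (d^{2a} − 1). Then f attains its minimum over {1, …, n − 1} at a = 1 (and, by the symmetry f(a) = f(n − a), also at a = n − 1): for every a with 1 ≤ a ≤ n − 1 one has f(a) ≥ f(1). -/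
private lemma even_mul_pred (x : ℕ) : ∃ k, x * (x - 1) = 2 * k := by
  obtain ⟨k, hk⟩ := Nat.even_mul_pred_self x
  exact ⟨k, by omega⟩

private lemma core_ineq (x y p q : ℕ) (hp : 2 ≤ p) (hxp : p ≤ x) (hyp : p ≤ y)
    (hxq : x ≤ q) (hN : x * y = p * q) :
    x * (x - 1) * (y ^ 2 - 1) + y * (y - 1) * (x ^ 2 - 1)
      ≥ p * (p - 1) * (q ^ 2 - 1) + q * (q - 1) * (p ^ 2 - 1) := by
  have hx1 : 1 ≤ x := by omega
  have hy1 : 1 ≤ y := by omega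
  have hp1 : 1 ≤ p := by omega
  have hq1 : 1 ≤ q := by omega
  have hx2 : 1 ≤ x ^ 2 := Nat.one_le_pow _ _ (by omega)
  have hy2 : 1 ≤ y ^ 2 := Nat.one_le_pow _ _ (by omega)
  have hp2 : 1 ≤ p ^ 2 := Nat.one_le_pow _ _ (by omega)
  have hq2 : 1 ≤ q ^ 2 := Nat.one_le_pow _ _ (by omega)
  zify [hx1, hy1, hp1, hq1, hx2, hy2, hp2, hq2] at *
  have hs : (x : ℤ) + y ≤ p + q := by
    nlinarith [mul_nonneg (sub_nonneg.2 hxp) (sub_nonneg.2 hxq)]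
  nlinarith [mul_nonneg (sub_nonneg.2 hs)
      (by nlinarith : (0:ℤ) ≤ p * q + (x + y) + (p + q) - 1),
    mul_pos (by linarith : (0:ℤ) < (x:ℤ)) (by linarith : (0:ℤ) < (y:ℤ))]

/-- For `d ≥ 2`, `n ≥ 2` and `1 ≤ a ≤ n - 1`, the equation count
`f(a) = C(d^a, 2)·(d^{2(n-a)} - 1) + C(d^{n-a}, 2)·(d^{2a} - 1)` attains its minimum
over `{1, …, n-1}` at `a = 1` (equivalently, by the symmetry `f(a) = f(n-a)`, at
`a = n - 1`): `f(a) ≥ f(1)` for all such `a`. -/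
theorem equation_count_minimized_at_unbalanced (d n : ℕ) (hd : 2 ≤ d) (hn : 2 ≤ n) :
    ∀ a : ℕ, 1 ≤ a → a ≤ n - 1 →
      d ^ a * (d ^ a - 1) / 2 * (d ^ (2 * (n - a)) - 1)
        + d ^ (n - a) * (d ^ (n - a) - 1) / 2 * (d ^ (2 * a) - 1)
      ≥ d ^ 1 * (d ^ 1 - 1) / 2 * (d ^ (2 * (n - 1)) - 1)
        + d ^ (n - 1) * (d ^ (n - 1) - 1) / 2 * (d ^ (2 * 1) - 1) := by
  intro a ha1 ha2
  set x := d ^ a with hxdef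
  set y := d ^ (n - a) with hydef
  set q := d ^ (n - 1) with hqdef
  have hrw1 : d ^ (2 * (n - a)) = y ^ 2 := by
    rw [hydef, ← pow_mul, Nat.mul_comm]
  have hrw2 : d ^ (2 * a) = x ^ 2 := by
    rw [hxdef, ← pow_mul, Nat.mul_comm]
  have hrw3 : d ^ (2 * (n - 1)) = q ^ 2 := by
    rw [hqdef, ← pow_mul, Nat.mul_comm]
  have hrw4 : d ^ (2 * 1) = d ^ 2 := by norm_num
  rw [hrw1, hrw2, hrw3, hrw4, pow_one]
  -- basic facts
  have hxp : d ≤ x := by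
    simpa using Nat.pow_le_pow_right (by omega) ha1
  have hyp : d ≤ y := by
    simpa using Nat.pow_le_pow_right (by omega) (show 1 ≤ n - a by omega)
  have hxq : x ≤ q := Nat.pow_le_pow_right (by omega) ha2
  have hN : x * y = d * q := by
    rw [hxdef, hydef, hqdef, ← pow_add, ← pow_succ']
    congr 1
    omega
  have key := core_ineq x y d q hd hxp hyp hxq hN
  obtain ⟨kx, hkx⟩ := even_mul_pred x
  obtain ⟨ky, hky⟩ := even_mul_pred y
  obtain ⟨kd, hkd⟩ := even_mul_pred d
  obtain ⟨kq, hkq⟩ := even_mul_pred q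
  rw [hkx, hky, hkd, hkq, Nat.mul_div_cancel_left _ (by norm_num : 0 < 2),
    Nat.mul_div_cancel_left _ (by norm_num : 0 < 2),
    Nat.mul_div_cancel_left _ (by norm_num : 0 < 2),
    Nat.mul_div_cancel_left _ (by norm_num : 0 < 2)]
  refine Nat.le_of_mul_le_mul_left ?_ (show 0 < 2 by norm_num)
  have e1 : 2 * (kx * (y ^ 2 - 1) + ky * (x ^ 2 - 1))
      = x * (x - 1) * (y ^ 2 - 1) + y * (y - 1) * (x ^ 2 - 1) := by
    rw [hkx, hky]; ring
  have e2 : 2 * (kd * (q ^ 2 - 1) + kq * (d ^ 2 - 1))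
      = d * (d - 1) * (q ^ 2 - 1) + q * (q - 1) * (d ^ 2 - 1) := by
    rw [hkd, hkq]; ring
  rw [e1, e2]
  exact key
end
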